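/- Let n ≥ 1 and L be natural numbers and let D : List Bool → List Bool → Bool. Suppose that for every relation r : Fin n → Fin n → Bool that is a partial order (reflexive, antisymmetric, transitive) there exists a label assignment ℓ : Fin n → List Bool with (ℓ u).length ≤ L for all u and D (ℓ u) (ℓ v) = (r u v) for all u, v. Then (L : ℝ) ≥ n/4 − 2. -/

import Mathlib

/-!
Split `Fin n` into `⌊n/2⌋` lower and `⌈n/2⌉` upper points. Every relation `f` from the lower
to the upper points gives a partial order of height two (`x ≤ y` iff `x = y`, or `x` is lower,
`y` is upper and `f x y`), so there are `2 ^ (⌊n/2⌋ ⌈n/2⌉)` distinct partial orders. Since the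
tuple of labels determines the order and there are fewer than `2 ^ (L + 1)` labels of length
at most `L`, we get `⌊n/2⌋ ⌈n/2⌉ ≤ (L + 1) n`, i.e. `n ≤ 4 L + 4`.
-/

open Function

/-- The binary digits of `l`, least significant first, followed by a leading `1`; the leading
digit makes lists of different lengths get different codes. -/
def binaryCode (l : List Bool) : ℕ := l.foldr Nat.bit 1

@[simp] lemma binaryCode_nil : binaryCode [] = 1 := rfl

@[simp] lemma binaryCode_cons (b : Bool) (l : List Bool) :
    binaryCode (b :: l) = Nat.bit b (binaryCode l) := rfl

lemma binaryCode_ne_zero (l : List Bool) : binaryCode l ≠ 0 := by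
  induction l with
  | nil => decide
  | cons b t ih => exact Nat.bit_ne_zero b ih

lemma binaryCode_lt_two_pow (l : List Bool) : binaryCode l < 2 ^ (l.length + 1) := by
  induction l with
  | nil => decide
  | cons b t ih => exact Nat.bit_lt_two_pow_succ_iff.2 ih

lemma binaryCode_injective : Injective binaryCode := by
  intro l₁ l₂ h
  induction l₁ generalizing l₂ with
  | nil =>
    cases l₂ with
    | nil => rfl
    | cons b t => exact (binaryCode_ne_zero t (by simpa using (congrArg Nat.div2 h).symm)).elim
  | cons b t ih =>
    cases l₂ with
    | nil => exact (binaryCode_ne_zero t (by simpa using congrArg Nat.div2 h)).elim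
    | cons b' t' =>
      have hb : b = b' := by simpa using congrArg Nat.bodd h
      have ht : binaryCode t = binaryCode t' := by simpa using congrArg Nat.div2 h
      rw [hb, ih ht]

section Labeling

variable {ι α β : Type*}

def HasLabeling (D : List Bool → List Bool → Bool) (L : ℕ) (r : α → α → Bool) : Prop :=
  ∃ ℓ : α → List Bool, (∀ u, (ℓ u).length ≤ L) ∧ ∀ u v, D (ℓ u) (ℓ v) = r u v

theorem card_le_of_forall_hasLabeling [Fintype ι] [Fintype α]
    {D : List Bool → List Bool → Bool} {L : ℕ} {R : ι → α → α → Bool} (hR : Injective R)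
    (h : ∀ i, HasLabeling D L (R i)) : Fintype.card ι ≤ 2 ^ ((L + 1) * Fintype.card α) := by
  classical
  choose ℓ hℓ using h
  have hℓ_inj : Injective ℓ := fun i j hij => hR <| by
    ext u v
    rw [← (hℓ i).2, ← (hℓ j).2, hij]
  let code (i : ι) (u : α) : Fin (2 ^ (L + 1)) :=
    ⟨binaryCode (ℓ i u), (binaryCode_lt_two_pow _).trans_le
      (Nat.pow_le_pow_right two_pos (by simpa using (hℓ i).1 u))⟩
  have hcode : Injective code := fun i j hij => hℓ_inj <| funext fun u =>
    binaryCode_injective (congrArg Fin.val (congrFun hij u))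
  simpa [← pow_mul] using Fintype.card_le_of_injective code hcode

def IsBoolPartialOrder (r : α → α → Bool) : Prop :=
  (∀ x, r x x = true) ∧
    (∀ x y, r x y = true → r y x = true → x = y) ∧
    (∀ x y z, r x y = true → r y z = true → r x z = true)

lemma IsBoolPartialOrder.onFun {r : β → β → Bool} (hr : IsBoolPartialOrder r) {e : α → β}
    (he : Injective e) : IsBoolPartialOrder (r on e) :=
  ⟨fun x => hr.1 (e x), fun _ _ hxy hyx => he (hr.2.1 _ _ hxy hyx),
    fun x y z => hr.2.2 (e x) (e y) (e z)⟩

lemma Function.Surjective.injective_onFun {γ : Type*} {e : α → β} (he : Surjective e) :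
    Injective fun r : β → β → γ => r on e := by
  intro r s hrs
  ext x y
  obtain ⟨x, rfl⟩ := he x
  obtain ⟨y, rfl⟩ := he y
  exact congrFun₂ hrs x y

variable [DecidableEq α] [DecidableEq β]

def bipartiteOrder (f : α → β → Bool) : α ⊕ β → α ⊕ β → Bool
  | .inl a, .inl a' => decide (a = a')
  | .inr b, .inr b' => decide (b = b')
  | .inl a, .inr b => f a b
  | .inr _, .inl _ => false

lemma isBoolPartialOrder_bipartiteOrder (f : α → β → Bool) :
    IsBoolPartialOrder (bipartiteOrder f) := by
  refine ⟨?_, ?_, ?_⟩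
  · rintro (a | b) <;> simp [bipartiteOrder]
  · rintro (a | b) (a' | b') <;> grind [bipartiteOrder]
  · rintro (a | b) (a' | b') (a'' | b'') <;> grind [bipartiteOrder]

lemma bipartiteOrder_injective : Injective (bipartiteOrder : (α → β → Bool) → _) :=
  fun _ _ hfg => funext₂ fun a b => congrFun₂ hfg (.inl a) (.inr b)

end Labeling

lemma le_four_mul_add_four_of_mul_half_le {n L : ℕ} (h : (n - n / 2) * (n / 2) ≤ (L + 1) * n) :
    n ≤ 4 * L + 4 := by
  obtain ⟨k, rfl | rfl⟩ := Nat.even_or_odd' n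
  · rw [show 2 * k / 2 = k by omega, show 2 * k - k = k by omega] at h
    nlinarith
  · rw [show (2 * k + 1) / 2 = k by omega, show 2 * k + 1 - k = k + 1 by omega] at h
    nlinarith

theorem labeling_lower_bound_general (n L : ℕ)
    (D : List Bool → List Bool → Bool)
    (h : ∀ r : Fin n → Fin n → Bool,
      ((∀ x, r x x = true) ∧
       (∀ x y, r x y = true → r y x = true → x = y) ∧
       (∀ x y z, r x y = true → r y z = true → r x z = true)) →
      ∃ ℓ : Fin n → List Bool,
        (∀ u : Fin n, (ℓ u).length ≤ L) ∧
        (∀ u v : Fin n, D (ℓ u) (ℓ v) = r u v)) :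
    (L : ℝ) ≥ (n : ℝ) / 4 - 2 := by
  let e : Fin n ≃ Fin (n / 2) ⊕ Fin (n - n / 2) :=
    (finCongr (by omega)).trans finSumFinEquiv.symm
  have hcard := card_le_of_forall_hasLabeling (D := D) (L := L)
    (e.surjective.injective_onFun.comp bipartiteOrder_injective)
    fun f => h _ ((isBoolPartialOrder_bipartiteOrder f).onFun e.injective)
  simp only [Fintype.card_fun, Fintype.card_bool, Fintype.card_fin, ← pow_mul] at hcard
  have hn : n ≤ 4 * L + 4 :=
    le_four_mul_add_four_of_mul_half_le ((Nat.pow_le_pow_iff_right one_lt_two).1 hcard)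
  rify at hn
  linarith

theorem labeling_lower_bound (n L : ℕ) (hn : 1 ≤ n)
    (D : List Bool → List Bool → Bool)
    (h : ∀ r : Fin n → Fin n → Bool,
      ((∀ x, r x x = true) ∧
       (∀ x y, r x y = true → r y x = true → x = y) ∧
       (∀ x y z, r x y = true → r y z = true → r x z = true)) →
      ∃ ℓ : Fin n → List Bool,
        (∀ u : Fin n, (ℓ u).length ≤ L) ∧
        (∀ u v : Fin n, D (ℓ u) (ℓ v) = r u v)) :
    (L : ℝ) ≥ (n : ℝ) / 4 - 2 :=
  labeling_lower_bound_general n L D h
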